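/- arXiv:1110.2356 — 4 statements merged into one kernel-verified Lean document; each statement's English description precedes it below -/
import Mathlib

section
/- Let A and K be as in the PVH setup: K = F/δ_K(R_F) where F is free with augmentation ideal I_F, R_F is the free F-bimodule on symbols Y_q mapping via δ_K to generators y_q ∈ I_F² of the relations ideal M, and A is the graded quotient defined via the leading-quadratic-part maps δ_A. Then for each p ≥ 2 the map κ_p^Syz: ker(δ_K|_{R_{≥p}}) → ker(δ_A|_{R_p}) induced by the projection π_p¹: R_{≥p} → R_p is surjective for all p ≥ 2 if and only if δ_K(R_{≥p}) = M ∩ I_F^p for all p ≥ 2. -/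
/-- The free algebra `F` on a set `X` of generators. -/
abbrev FreeAlg (X : Type*) := FreeAlgebra ℚ X

/-- The augmentation of the free algebra, sending each generator to `1`. -/
noncomputable def aug (X : Type*) : FreeAlg X →ₐ[ℚ] ℚ :=
  FreeAlgebra.lift ℚ (fun _ : X => (1 : ℚ))

/-- The augmentation ideal `I_F` of the free algebra, as a `ℚ`-submodule. -/
noncomputable def augIdeal (X : Type*) : Submodule ℚ (FreeAlg X) :=
  LinearMap.ker (aug X).toLinearMap

/-- `I_F^p / I_F^{p+1}`, the degree-`p` graded piece `X̃^p` of the free algebra. -/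
noncomputable abbrev grF (X : Type*) (p : ℕ) :=
  ↥(augIdeal X ^ p) ⧸
    Submodule.comap (augIdeal X ^ p).subtype (augIdeal X ^ (p + 1))

/-! Both directions are a diagram chase in the exact rows `R (p+1) → R p → Rdeg p → 0`.
If `M ∩ I^p = δK (R p)`, an element of `M ∩ I^{p+1}` is `δK r` with `π₁ r` a syzygy of `δA`;
subtracting a syzygy `r'` lifting it leaves `r - r' = ι s` with `δK s = δK r`. So stability
propagates upwards from `p = 2`, where it is the definition of `M`. Conversely, for a syzygy
`π₁ r` of `δA` we get `δK r ∈ M ∩ I^{p+1} = δK (R (p+1))`, say `δK r = δK (ι s)`, and `r - ι s`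
is a syzygy lifting `π₁ r`. -/

lemma Submodule.pow_succ_le_pow_of_mul_le {k A : Type*} [CommSemiring k] [Semiring A] [Algebra k A]
    {I : Submodule k A} (hI : I * I ≤ I) {p : ℕ} (hp : p ≠ 0) : I ^ (p + 1) ≤ I ^ p := by
  obtain ⟨q, rfl⟩ := Nat.exists_eq_succ_of_ne_zero hp
  rw [pow_succ, pow_succ, mul_assoc]
  exact mul_le_mul_right hI _

lemma augIdeal_mul_le (X : Type*) : augIdeal X * augIdeal X ≤ augIdeal X :=
  Submodule.mul_le.2 fun a _ b hb => by
    simp only [augIdeal, LinearMap.mem_ker, AlgHom.toLinearMap_apply, map_mul] at hb ⊢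
    rw [hb, mul_zero]

section FilteredSyzygies

variable {k A : Type*} [Ring k] [AddCommGroup A] [Module k A] {Fil : ℕ → Submodule k A}
  {R Rdeg : ℕ → Type*} [∀ p, AddCommGroup (R p)] [∀ p, Module k (R p)]
  [∀ p, AddCommGroup (Rdeg p)] [∀ p, Module k (Rdeg p)]
  {ι : ∀ p, R (p + 1) →ₗ[k] R p} {π₁ : ∀ p, R p →ₗ[k] Rdeg p}
  {δK : ∀ p, R p →ₗ[k] A} {hδ : ∀ p r, δK p r ∈ Fil p}
  {δA : ∀ p, Rdeg p →ₗ[k] ↥(Fil p) ⧸ (Fil (p + 1)).comap (Fil p).subtype}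

lemma δA_π₁_eq_zero_iff
    (hδA : ∀ p r, δA p (π₁ p r) = Submodule.Quotient.mk ⟨δK p r, hδ p r⟩) (p : ℕ) (r : R p) :
    δA p (π₁ p r) = 0 ↔ δK p r ∈ Fil (p + 1) := by
  rw [hδA, Submodule.Quotient.mk_eq_zero, Submodule.mem_comap, Submodule.subtype_apply]

lemma range_δK_succ_le (hcomp : ∀ p, (δK p).comp (ι p) = δK (p + 1)) (p : ℕ) :
    LinearMap.range (δK (p + 1)) ≤ LinearMap.range (δK p) := by
  rw [← hcomp p, LinearMap.range_comp]
  exact LinearMap.map_le_range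

lemma range_δK_succ_eq_of_lift
    (hδA : ∀ p r, δA p (π₁ p r) = Submodule.Quotient.mk ⟨δK p r, hδ p r⟩)
    (hexact : ∀ p, LinearMap.ker (π₁ p) = LinearMap.range (ι p))
    (hcomp : ∀ p, (δK p).comp (ι p) = δK (p + 1)) (M : Submodule k A) {p : ℕ}
    (hFil : Fil (p + 1) ≤ Fil p) (hrange : LinearMap.range (δK p) = M ⊓ Fil p)
    (hlift : ∀ y, δA p y = 0 → ∃ r, δK p r = 0 ∧ π₁ p r = y) :
    LinearMap.range (δK (p + 1)) = M ⊓ Fil (p + 1) := by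
  refine le_antisymm (le_inf ?_ ?_) ?_
  · exact (range_δK_succ_le hcomp p).trans (hrange.le.trans inf_le_left)
  · rintro _ ⟨s, rfl⟩
    exact hδ (p + 1) s
  · rintro x ⟨hxM, hxFil⟩
    obtain ⟨r, rfl⟩ : x ∈ LinearMap.range (δK p) := hrange ▸ ⟨hxM, hFil hxFil⟩
    obtain ⟨r', hr'_syz, hr'_lift⟩ := hlift _ ((δA_π₁_eq_zero_iff hδA p r).2 hxFil)
    obtain ⟨s, hs⟩ : r - r' ∈ LinearMap.range (ι p) := by
      rw [← hexact, LinearMap.mem_ker, map_sub, hr'_lift, sub_self]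
    refine ⟨s, ?_⟩
    rw [← hcomp, LinearMap.comp_apply, hs, map_sub, hr'_syz, sub_zero]

lemma exists_lift_of_range_δK
    (hδA : ∀ p r, δA p (π₁ p r) = Submodule.Quotient.mk ⟨δK p r, hδ p r⟩)
    (hπ₁ : ∀ p, Function.Surjective (π₁ p))
    (hexact : ∀ p, LinearMap.ker (π₁ p) = LinearMap.range (ι p))
    (hcomp : ∀ p, (δK p).comp (ι p) = δK (p + 1)) (M : Submodule k A) {p : ℕ}
    (hrange : LinearMap.range (δK p) ≤ M)
    (hrange_succ : M ⊓ Fil (p + 1) ≤ LinearMap.range (δK (p + 1)))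
    (y : Rdeg p) (hy : δA p y = 0) : ∃ r, δK p r = 0 ∧ π₁ p r = y := by
  obtain ⟨r, rfl⟩ := hπ₁ p y
  obtain ⟨s, hs⟩ := hrange_succ ⟨hrange ⟨r, rfl⟩, (δA_π₁_eq_zero_iff hδA p r).1 hy⟩
  have hιs : π₁ p (ι p s) = 0 := (hexact p).ge ⟨s, rfl⟩
  refine ⟨r - ι p s, ?_, ?_⟩
  · rw [map_sub, ← LinearMap.comp_apply, hcomp, hs, sub_self]
  · rw [map_sub, hιs, sub_zero]

end FilteredSyzygies

theorem pvh_criterion_iff_stability_general {X : Type*}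
    (R : ℕ → Type*) [∀ p, AddCommGroup (R p)] [∀ p, Module ℚ (R p)]
    (Rdeg : ℕ → Type*) [∀ p, AddCommGroup (Rdeg p)] [∀ p, Module ℚ (Rdeg p)]
    (ι : ∀ p, R (p + 1) →ₗ[ℚ] R p)
    (π₁ : ∀ p, R p →ₗ[ℚ] Rdeg p)
    (δK : ∀ p, R p →ₗ[ℚ] FreeAlg X)
    (hδ : ∀ p r, δK p r ∈ augIdeal X ^ p)
    (δA : ∀ p, Rdeg p →ₗ[ℚ] grF X p)
    -- exactness of the rows `0 → R_{≥p+1} → R_{≥p} → R_p → 0`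
    (hπ₁ : ∀ p, Function.Surjective (π₁ p))
    (hexact : ∀ p, LinearMap.ker (π₁ p) = LinearMap.range (ι p))
    -- `δK` is compatible with the filtration maps
    (hcomp : ∀ p, (δK p).comp (ι p) = δK (p + 1))
    -- `δA` is the homogeneous truncation of `δK`
    (hδA : ∀ p (r : R p),
      δA p (π₁ p r) = Submodule.Quotient.mk ⟨δK p r, hδ p r⟩)
    -- `M` is the two-sided ideal of relations, generated in degrees ≥ 2
    (M : Submodule ℚ (FreeAlg X))
    (hM : M = LinearMap.range (δK 2)) :
    -- the PVH criterion: all the maps `κ_p^Syz` are surjective …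
    (∀ p, 2 ≤ p → ∀ y : Rdeg p, δA p y = 0 →
        ∃ r : R p, δK p r = 0 ∧ π₁ p r = y) ↔
    -- … iff `δK(R_{≥p}) = M ∩ I_F^p` for all `p ≥ 2`
    (∀ p, 2 ≤ p → LinearMap.range (δK p) = M ⊓ augIdeal X ^ p) := by
  constructor
  · intro hlift p hp
    induction p, hp using Nat.le_induction with
    | base =>
      subst hM
      exact (inf_eq_left.2 fun _ ⟨r, hr⟩ => hr ▸ hδ 2 r).symm
    | succ p hp ih =>
      exact range_δK_succ_eq_of_lift hδA hexact hcomp M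
        ((augIdeal X).pow_succ_le_pow_of_mul_le (augIdeal_mul_le X) (by omega)) ih (hlift p hp)
  · intro hrange p hp
    exact exists_lift_of_range_δK hδA hπ₁ hexact hcomp M
      ((hrange p hp).le.trans inf_le_left) (hrange (p + 1) (by omega)).ge

/-- (Proposition: PVH criterion ↔ stability.)  In the PVH setup — `F` the free
algebra on `X` with augmentation ideal `I_F`; `R p` playing the role of the
filtration piece `R_{≥p}` of the free `F`-bimodule on the relation symbols,
`Rdeg p` its degree-`p` graded piece; `δK` the evaluation of relation symbols with
`M = δK(R_F) ⊆ I_F²` the two-sided ideal of relations; and `δA` the homogeneous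
(leading quadratic part) truncation of `δK` — the maps
`κ_p^Syz : ker (δK|R_{≥p}) → ker (δA|R_p)` induced by the projections
`π¹_p : R_{≥p} → R_p` are surjective for all `p ≥ 2` if and only if
`δK(R_{≥p}) = M ∩ I_F^p` for all `p ≥ 2`. -/
theorem pvh_criterion_iff_stability {X : Type*}
    (R : ℕ → Type*) [∀ p, AddCommGroup (R p)] [∀ p, Module ℚ (R p)]
    (Rdeg : ℕ → Type*) [∀ p, AddCommGroup (Rdeg p)] [∀ p, Module ℚ (Rdeg p)]
    (ι : ∀ p, R (p + 1) →ₗ[ℚ] R p)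
    (π₁ : ∀ p, R p →ₗ[ℚ] Rdeg p)
    (δK : ∀ p, R p →ₗ[ℚ] FreeAlg X)
    (hδ : ∀ p r, δK p r ∈ augIdeal X ^ p)
    (δA : ∀ p, Rdeg p →ₗ[ℚ] grF X p)
    -- exactness of the rows `0 → R_{≥p+1} → R_{≥p} → R_p → 0`
    (hι : ∀ p, Function.Injective (ι p))
    (hπ₁ : ∀ p, Function.Surjective (π₁ p))
    (hexact : ∀ p, LinearMap.ker (π₁ p) = LinearMap.range (ι p))
    -- `δK` is compatible with the filtration maps
    (hcomp : ∀ p, (δK p).comp (ι p) = δK (p + 1))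
    -- `δA` is the homogeneous truncation of `δK`
    (hδA : ∀ p (r : R p),
      δA p (π₁ p r) = Submodule.Quotient.mk ⟨δK p r, hδ p r⟩)
    -- `M` is the two-sided ideal of relations, generated in degrees ≥ 2
    (M : Submodule ℚ (FreeAlg X))
    (hM : M = LinearMap.range (δK 2))
    (hM2 : M ≤ augIdeal X * augIdeal X)
    (hMideal : ∀ f g : FreeAlg X, ∀ m ∈ M, f * m * g ∈ M) :
    -- the PVH criterion: all the maps `κ_p^Syz` are surjective …
    (∀ p, 2 ≤ p → ∀ y : Rdeg p, δA p y = 0 →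
        ∃ r : R p, δK p r = 0 ∧ π₁ p r = y) ↔
    -- … iff `δK(R_{≥p}) = M ∩ I_F^p` for all `p ≥ 2`
    (∀ p, 2 ≤ p → LinearMap.range (δK p) = M ⊓ augIdeal X ^ p) :=
  pvh_criterion_iff_stability_general R Rdeg ι π₁ δK hδ δA hπ₁ hexact hcomp hδA M hM
end

section
/- (PVH Criterion via Snake Lemma) In the PVH setup, for each p ≥ 2 there is an exact sequence ker δ_K|_{R_{≥p}} → ker δ_A|_{R_p} → I_F^{p+1}/δ_K(R_{≥p+1}) → I_F^p/δ_K(R_{≥p}) → A^p → 0, where A^p is the degree-p component of the quadratic approximation A. In particular, the first map is surjective if and only if the map ν_p: I_F^{p+1}/δ_K(R_{≥p+1}) → I_F^p/δ_K(R_{≥p}) is injective. -/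
/-!
The four maps are those of the snake lemma for the morphism of short exact sequences
`(R_{≥p+1} ↪ R_{≥p} ↠ R_p) → (I_F^{p+1} ↪ I_F^p ↠ X̃^p)` given by `δ_K` and `δ_A`. Since the
sequence is exact on both sides of the connecting map `α`, the kernel map is surjective iff
`α = 0` iff `ν` is injective.
-/

open LinearMap Submodule Function

section Diagram

variable {R M₁ M₂ M₃ N₁ N₂ N₃ : Type*} [Ring R]
  [AddCommGroup M₁] [Module R M₁] [AddCommGroup M₂] [Module R M₂] [AddCommGroup M₃] [Module R M₃]
  [AddCommGroup N₁] [Module R N₁] [AddCommGroup N₂] [Module R N₂] [AddCommGroup N₃] [Module R N₃]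
  {f₁ : M₁ →ₗ[R] M₂} {f₂ : M₂ →ₗ[R] M₃} {g₁ : N₁ →ₗ[R] N₂} {g₂ : N₂ →ₗ[R] N₃}
  {i₁ : M₁ →ₗ[R] N₁} {i₂ : M₂ →ₗ[R] N₂} {i₃ : M₃ →ₗ[R] N₃}

theorem apply_mem_ker_of_comp_eq (h₂ : g₂ ∘ₗ i₂ = i₃ ∘ₗ f₂) : ∀ x ∈ ker i₂, f₂ x ∈ ker i₃ := by
  intro x hx
  rw [mem_ker, ← LinearMap.comp_apply, ← h₂, LinearMap.comp_apply, mem_ker.mp hx, map_zero]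

theorem range_le_comap_range_of_comp_eq (h₁ : g₁ ∘ₗ i₁ = i₂ ∘ₗ f₁) :
    range i₁ ≤ comap g₁ (range i₂) := by
  rw [← map_le_iff_le_comap, ← range_comp, h₁]
  exact range_comp_le_range f₁ i₂

theorem surjective_mapQ_of_surjective {p : Submodule R N₂} {q : Submodule R N₃}
    (hg₂ : Surjective g₂) (h : p ≤ comap g₂ q) : Surjective (mapQ p q g₂ h) := by
  rw [← range_eq_top, range_mapQ, range_eq_top.mpr hg₂, Submodule.map_top, range_mkQ]

theorem exact_mapQ_range_of_surjective {p : Submodule R N₁} (hf₂ : Surjective f₂)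
    (hg : Exact g₁ g₂) (h₂ : g₂ ∘ₗ i₂ = i₃ ∘ₗ f₂) (h : p ≤ comap g₁ (range i₂)) :
    Exact (mapQ _ _ g₁ h) (mapQ _ _ g₂ (range_le_comap_range_of_comp_eq h₂)) := by
  rw [hg.exact_mapQ_iff, ← range_comp, h₂, range_comp_of_range_eq_top _ (range_eq_top.mpr hf₂)]
  exact inf_le_right

end Diagram

section Snake

variable {R M₁ M₂ M₃ N₁ N₂ N₃ : Type*} [CommRing R]
  [AddCommGroup M₁] [Module R M₁] [AddCommGroup M₂] [Module R M₂] [AddCommGroup M₃] [Module R M₃]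
  [AddCommGroup N₁] [Module R N₁] [AddCommGroup N₂] [Module R N₂] [AddCommGroup N₃] [Module R N₃]
  {f₁ : M₁ →ₗ[R] M₂} {f₂ : M₂ →ₗ[R] M₃} {g₁ : N₁ →ₗ[R] N₂} {g₂ : N₂ →ₗ[R] N₃}
  {i₁ : M₁ →ₗ[R] N₁} {i₂ : M₂ →ₗ[R] N₂} {i₃ : M₃ →ₗ[R] N₃}
  (hf : Exact f₁ f₂) (hg : Exact g₁ g₂) (h₁ : g₁ ∘ₗ i₁ = i₂ ∘ₗ f₁)
  (h₂ : g₂ ∘ₗ i₂ = i₃ ∘ₗ f₂) (hf₂ : Surjective f₂) (hg₁ : Injective g₁)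

noncomputable def kerConnectingMap : ker i₃ →ₗ[R] N₁ ⧸ range i₁ :=
  SnakeLemma.δ' i₁ i₂ i₃ f₁ f₂ hf g₁ g₂ hg h₁ h₂ _ (exact_subtype_ker_map i₃) _
    (exact_map_mkQ_range i₁) hf₂ hg₁

theorem kerConnectingMap_eq (x : ker i₃) (y : M₂) (z : N₁) (hy : f₂ y = x) (hz : g₁ z = i₂ y) :
    kerConnectingMap hf hg h₁ h₂ hf₂ hg₁ x = Submodule.Quotient.mk z :=
  SnakeLemma.δ'_eq _ _ _ _ _ _ _ _ _ _ _ _ _ _ _ _ _ x y hy z hz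

theorem exact_restrict_kerConnectingMap :
    Exact (f₂.restrict (apply_mem_ker_of_comp_eq h₂)) (kerConnectingMap hf hg h₁ h₂ hf₂ hg₁) :=
  SnakeLemma.exact_δ'_right _ _ _ _ _ _ _ _ _ _ _ _ (exact_subtype_ker_map i₂) _ _ _ _ _ _ _
    (subtype_comp_restrict _).symm (injective_subtype _)

theorem exact_kerConnectingMap_mapQ :
    Exact (kerConnectingMap hf hg h₁ h₂ hf₂ hg₁)
      (mapQ _ _ g₁ (range_le_comap_range_of_comp_eq h₁)) :=
  SnakeLemma.exact_δ'_left _ _ _ _ _ _ _ _ _ _ _ _ _ _ _ _ (exact_map_mkQ_range i₂) _ _ _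
    (mapQ_mkQ _ _ _) (mkQ_surjective _)

end Snake

theorem pvh_snake_lemma_general
    {R₁ R₂ R₃ F₁ F₂ F₃ : Type*}
    [AddCommGroup R₁] [Module ℚ R₁] [AddCommGroup R₂] [Module ℚ R₂]
    [AddCommGroup R₃] [Module ℚ R₃] [AddCommGroup F₁] [Module ℚ F₁]
    [AddCommGroup F₂] [Module ℚ F₂] [AddCommGroup F₃] [Module ℚ F₃]
    (ι : R₁ →ₗ[ℚ] R₂) (π₁ : R₂ →ₗ[ℚ] R₃)
    (j : F₁ →ₗ[ℚ] F₂) (π₀ : F₂ →ₗ[ℚ] F₃)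
    (δKres : R₁ →ₗ[ℚ] F₁) (δK : R₂ →ₗ[ℚ] F₂) (δA : R₃ →ₗ[ℚ] F₃)
    -- exactness of the top row
    (hπ₁ : Function.Surjective π₁)
    (htop : ker π₁ = range ι)
    -- exactness of the bottom row
    (hj : Function.Injective j) (hπ₀ : Function.Surjective π₀)
    (hbot : ker π₀ = range j)
    -- commutativity of the diagram
    (hsq1 : j.comp δKres = δK.comp ι) (hsq2 : π₀.comp δK = δA.comp π₁) :
    ∃ (κ : ker δK →ₗ[ℚ] ker δA)
      (α : ker δA →ₗ[ℚ] (F₁ ⧸ range δKres))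
      (ν : (F₁ ⧸ range δKres) →ₗ[ℚ] (F₂ ⧸ range δK))
      (τ : (F₂ ⧸ range δK) →ₗ[ℚ] (F₃ ⧸ range δA)),
      -- κ is induced by π₁ on kernels
      (∀ x : ker δK, (κ x : R₃) = π₁ (x : R₂)) ∧
      -- α is the connecting homomorphism
      (∀ (x : ker δA) (y : R₂) (z : F₁), π₁ y = (x : R₃) → j z = δK y →
        α x = Submodule.Quotient.mk z) ∧
      -- ν and τ are induced by j and π₀
      (∀ z : F₁, ν (Submodule.Quotient.mk z) = Submodule.Quotient.mk (j z)) ∧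
      (∀ w : F₂, τ (Submodule.Quotient.mk w) = Submodule.Quotient.mk (π₀ w)) ∧
      -- the snake sequence is exact and ends in a surjection onto `A^p`
      range κ = ker α ∧ range α = ker ν ∧ range ν = ker τ ∧
      Function.Surjective τ ∧
      -- in particular: κ surjective ↔ ν injective
      (Function.Surjective κ ↔ Function.Injective ν) := by
  have hrow₁ : Exact ι π₁ := exact_iff.mpr htop
  have hrow₂ : Exact j π₀ := exact_iff.mpr hbot
  have hκα := exact_restrict_kerConnectingMap hrow₁ hrow₂ hsq1 hsq2 hπ₁ hj
  have hαν := exact_kerConnectingMap_mapQ hrow₁ hrow₂ hsq1 hsq2 hπ₁ hj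
  have hντ := exact_mapQ_range_of_surjective hπ₁ hrow₂ hsq2 (range_le_comap_range_of_comp_eq hsq1)
  refine ⟨_, _, _, _, fun _ => rfl, kerConnectingMap_eq hrow₁ hrow₂ hsq1 hsq2 hπ₁ hj,
    fun _ => rfl, fun _ => rfl, hκα.linearMap_ker_eq.symm, hαν.linearMap_ker_eq.symm,
    hντ.linearMap_ker_eq.symm, surjective_mapQ_of_surjective hπ₀ _, ?_⟩
  rw [surjective_iff_eq_zero_of_exact hκα, injective_iff_eq_zero_of_exact hαν]

/-- (PVH Criterion via the Snake Lemma.)  In the PVH setup, for each `p ≥ 2` the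
commutative diagram with exact rows
`0 → R_{≥p+1} → R_{≥p} → R_p → 0` and `0 → I_F^{p+1} → I_F^p → X̃^p → 0`,
with vertical maps `δ_K^{res}`, `δ_K`, `δ_A`, yields an exact sequence
`ker δ_K → ker δ_A → I_F^{p+1}/δ_K(R_{≥p+1}) → I_F^p/δ_K(R_{≥p}) → A^p → 0`,
where `A^p = X̃^p/δ_A(R_p)`.  In particular the induced map on kernels is
surjective iff `ν_p` is injective.

Here `R₁, R₂, R₃` stand for `R_{≥p+1}, R_{≥p}, R_p` and `F₁, F₂, F₃` for
`I_F^{p+1}, I_F^p, X̃^p`. -/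
theorem pvh_snake_lemma
    {R₁ R₂ R₃ F₁ F₂ F₃ : Type*}
    [AddCommGroup R₁] [Module ℚ R₁] [AddCommGroup R₂] [Module ℚ R₂]
    [AddCommGroup R₃] [Module ℚ R₃] [AddCommGroup F₁] [Module ℚ F₁]
    [AddCommGroup F₂] [Module ℚ F₂] [AddCommGroup F₃] [Module ℚ F₃]
    (ι : R₁ →ₗ[ℚ] R₂) (π₁ : R₂ →ₗ[ℚ] R₃)
    (j : F₁ →ₗ[ℚ] F₂) (π₀ : F₂ →ₗ[ℚ] F₃)
    (δKres : R₁ →ₗ[ℚ] F₁) (δK : R₂ →ₗ[ℚ] F₂) (δA : R₃ →ₗ[ℚ] F₃)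
    -- exactness of the top row
    (hι : Function.Injective ι) (hπ₁ : Function.Surjective π₁)
    (htop : ker π₁ = range ι)
    -- exactness of the bottom row
    (hj : Function.Injective j) (hπ₀ : Function.Surjective π₀)
    (hbot : ker π₀ = range j)
    -- commutativity of the diagram
    (hsq1 : j.comp δKres = δK.comp ι) (hsq2 : π₀.comp δK = δA.comp π₁) :
    ∃ (κ : ker δK →ₗ[ℚ] ker δA)
      (α : ker δA →ₗ[ℚ] (F₁ ⧸ range δKres))
      (ν : (F₁ ⧸ range δKres) →ₗ[ℚ] (F₂ ⧸ range δK))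
      (τ : (F₂ ⧸ range δK) →ₗ[ℚ] (F₃ ⧸ range δA)),
      -- κ is induced by π₁ on kernels
      (∀ x : ker δK, (κ x : R₃) = π₁ (x : R₂)) ∧
      -- α is the connecting homomorphism
      (∀ (x : ker δA) (y : R₂) (z : F₁), π₁ y = (x : R₃) → j z = δK y →
        α x = Submodule.Quotient.mk z) ∧
      -- ν and τ are induced by j and π₀
      (∀ z : F₁, ν (Submodule.Quotient.mk z) = Submodule.Quotient.mk (j z)) ∧
      (∀ w : F₂, τ (Submodule.Quotient.mk w) = Submodule.Quotient.mk (π₀ w)) ∧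
      -- the snake sequence is exact and ends in a surjection onto `A^p`
      range κ = ker α ∧ range α = ker ν ∧ range ν = ker τ ∧
      Function.Surjective τ ∧
      -- in particular: κ surjective ↔ ν injective
      (Function.Surjective κ ↔ Function.Injective ν) :=
  pvh_snake_lemma_general ι π₁ j π₀ δKres δK δA hπ₁ htop hj hπ₀ hbot hsq1 hsq2
end

section
/- The group of pure flat braids PfB_n is a split quotient of the pure virtual braid group PvB_n: there exist group homomorphisms ι: PfB_n → PvB_n and π: PvB_n → PfB_n with π ∘ ι = id. -/
/-- Generators `R_{ij}`, `1 ≤ i ≠ j ≤ n`, of the pure virtual braid group. -/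
def PvGen (n : ℕ) := {p : Fin n × Fin n // p.1 ≠ p.2}

/-- The free-group generator corresponding to `R_{ij}`. -/
def pvR {n : ℕ} (i j : Fin n) (h : i ≠ j) : FreeGroup (PvGen n) :=
  FreeGroup.of ⟨(i, j), h⟩

/-- Relators of the pure virtual braid group `PvB_n`: the Reidemeister III
relations `R_{ij}R_{ik}R_{jk} = R_{jk}R_{ik}R_{ij}` for distinct `i,j,k` and the
commutativity relations `R_{ij}R_{kl} = R_{kl}R_{ij}` for distinct `i,j,k,l`. -/
def pvbRels (n : ℕ) : Set (FreeGroup (PvGen n)) :=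
  {w | ∃ (i j k : Fin n) (hij : i ≠ j) (hik : i ≠ k) (hjk : j ≠ k),
      w = pvR i j hij * pvR i k hik * pvR j k hjk *
        (pvR j k hjk * pvR i k hik * pvR i j hij)⁻¹} ∪
  {w | ∃ (i j k l : Fin n) (hij : i ≠ j) (hik : i ≠ k) (hil : i ≠ l)
      (hjk : j ≠ k) (hjl : j ≠ l) (hkl : k ≠ l),
      w = pvR i j hij * pvR k l hkl * (pvR k l hkl * pvR i j hij)⁻¹}

/-- The additional relators `R_{ij}R_{ji} = 1` of the flat braid group `PfB_n`. -/
def pfbExtraRels (n : ℕ) : Set (FreeGroup (PvGen n)) :=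
  {w | ∃ (i j : Fin n) (hij : i ≠ j), w = pvR i j hij * pvR j i hij.symm}

/-- The pure virtual braid group `PvB_n`. -/
def PvB (n : ℕ) := PresentedGroup (pvbRels n)

/-- The group of pure flat braids `PfB_n`. -/
def PfB (n : ℕ) := PresentedGroup (pvbRels n ∪ pfbExtraRels n)

noncomputable instance (n : ℕ) : Group (PvB n) := by unfold PvB; infer_instance
noncomputable instance (n : ℕ) : Group (PfB n) := by unfold PfB; infer_instance

/-!
`ι` is well defined because, for a family with `x j i = (x i j)⁻¹`, the Reidemeister III relation
`x i j * x i k * x j k = x j k * x i k * x i j` is invariant under every permutation of `i, j, k`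
(each transposition turns it into a conjugate or the inverse of itself), and likewise commutation of
`x i j` with `x k l` survives reversing either pair. So all flat relations among the images reduce
to relations of `PvB_n` between generators `R_{ij}` with `i < j`. Finally `π ∘ ι` fixes `R_{ij}`
because `R_{ji}⁻¹ = R_{ij}` in `PfB_n`.
-/

section AntisymmetricFamily

variable {G α : Type*} [Group G] {x : α → α → G}

def YangBaxterAt (x : α → α → G) (i j k : α) : Prop :=
  x i j * x i k * x j k = x j k * x i k * x i j

namespace YangBaxterAt

variable {i j k : α}

lemma swap₁₂ (hx : ∀ i j, x j i = (x i j)⁻¹) (h : YangBaxterAt x i j k) :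
    YangBaxterAt x j i k := by
  have := congrArg (fun g => (x i j)⁻¹ * g * (x i j)⁻¹) h.symm
  simpa [YangBaxterAt, hx i j, mul_assoc] using this

lemma swap₂₃ (hx : ∀ i j, x j i = (x i j)⁻¹) (h : YangBaxterAt x i j k) :
    YangBaxterAt x i k j := by
  have := congrArg (fun g => (x j k)⁻¹ * g * (x j k)⁻¹) h.symm
  simpa [YangBaxterAt, hx j k, mul_assoc] using this

lemma swap₁₃ (hx : ∀ i j, x j i = (x i j)⁻¹) (h : YangBaxterAt x i j k) :
    YangBaxterAt x k j i := by
  rw [YangBaxterAt, hx j k, hx i k, hx i j]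
  simpa [mul_assoc] using congrArg (·⁻¹) h

end YangBaxterAt

variable [LinearOrder α]

lemma yangBaxterAt_of_lt (hx : ∀ i j, x j i = (x i j)⁻¹)
    (h : ∀ ⦃i j k⦄, i < j → j < k → YangBaxterAt x i j k) {i j k : α}
    (hij : i ≠ j) (hik : i ≠ k) (hjk : j ≠ k) : YangBaxterAt x i j k := by
  rcases hij.lt_or_gt with hij | hji <;> rcases hik.lt_or_gt with hik | hki <;>
    rcases hjk.lt_or_gt with hjk | hkj
  · exact h hij hjk
  · exact (h hik hkj).swap₂₃ hx
  · exact absurd (hij.trans hjk) hki.not_gt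
  · exact ((h hki hij).swap₁₃ hx).swap₁₂ hx
  · exact (h hji hik).swap₁₂ hx
  · exact absurd (hik.trans hkj) hji.not_gt
  · exact ((h hjk hki).swap₁₃ hx).swap₂₃ hx
  · exact (h hkj hji).swap₁₃ hx

lemma commute_of_lt (hx : ∀ i j, x j i = (x i j)⁻¹)
    (h : ∀ ⦃i j k l⦄, i < j → k < l → i ≠ k → i ≠ l → j ≠ k → j ≠ l → Commute (x i j) (x k l))
    {i j k l : α} (hij : i ≠ j) (hik : i ≠ k) (hil : i ≠ l) (hjk : j ≠ k) (hjl : j ≠ l)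
    (hkl : k ≠ l) : Commute (x i j) (x k l) := by
  rcases hij.lt_or_gt with hij | hji <;> rcases hkl.lt_or_gt with hkl | hlk
  · exact h hij hkl hik hil hjk hjl
  · simpa [hx l k] using (h hij hlk hil hik hjl hjk).inv_right
  · simpa [hx j i] using (h hji hkl hjk hjl hik hil).inv_left
  · simpa [hx j i, hx l k] using (h hji hlk hjl hjk hil hik).inv_left.inv_right

end AntisymmetricFamily

namespace PvB

variable {n : ℕ}

def gen (i j : Fin n) (h : i ≠ j) : PvB n :=
  PresentedGroup.of ⟨(i, j), h⟩

lemma gen_mul_gen_mul_gen {i j k : Fin n} (hij : i ≠ j) (hik : i ≠ k) (hjk : j ≠ k) :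
    gen i j hij * gen i k hik * gen j k hjk = gen j k hjk * gen i k hik * gen i j hij := by
  have := PresentedGroup.one_of_mem (rels := pvbRels n) (Or.inl ⟨i, j, k, hij, hik, hjk, rfl⟩)
  rw [map_mul, map_inv, mul_inv_eq_one] at this
  exact this

lemma commute_gen {i j k l : Fin n} (hij : i ≠ j) (hik : i ≠ k) (hil : i ≠ l) (hjk : j ≠ k)
    (hjl : j ≠ l) (hkl : k ≠ l) : Commute (gen i j hij) (gen k l hkl) := by
  have := PresentedGroup.one_of_mem (rels := pvbRels n)
    (Or.inr ⟨i, j, k, l, hij, hik, hil, hjk, hjl, hkl, rfl⟩)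
  rw [map_mul, map_inv, mul_inv_eq_one] at this
  exact this

variable (n) in
noncomputable def orientedGen (i j : Fin n) : PvB n :=
  if h : i < j then gen i j h.ne else if h' : j < i then (gen j i h'.ne)⁻¹ else 1

lemma orientedGen_of_lt {i j : Fin n} (h : i < j) : orientedGen n i j = gen i j h.ne :=
  dif_pos h

lemma orientedGen_swap (i j : Fin n) : orientedGen n j i = (orientedGen n i j)⁻¹ := by
  rcases lt_trichotomy i j with h | rfl | h
  · simp [orientedGen, h, h.not_gt]
  · simp [orientedGen]
  · simp [orientedGen, h, h.not_gt]

lemma yangBaxterAt_orientedGen {i j k : Fin n} (hij : i ≠ j) (hik : i ≠ k) (hjk : j ≠ k) :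
    YangBaxterAt (orientedGen n) i j k :=
  yangBaxterAt_of_lt orientedGen_swap (fun _ _ _ hij hjk => by
    simpa [YangBaxterAt, orientedGen_of_lt, hij, hjk, hij.trans hjk] using
      gen_mul_gen_mul_gen hij.ne (hij.trans hjk).ne hjk.ne) hij hik hjk

lemma commute_orientedGen {i j k l : Fin n} (hij : i ≠ j) (hik : i ≠ k) (hil : i ≠ l)
    (hjk : j ≠ k) (hjl : j ≠ l) (hkl : k ≠ l) : Commute (orientedGen n i j) (orientedGen n k l) :=
  commute_of_lt orientedGen_swap (fun _ _ _ _ hij hkl hik hil hjk hjl => by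
    simpa [orientedGen_of_lt, hij, hkl] using commute_gen hij.ne hik hil hjk hjl hkl.ne)
    hij hik hil hjk hjl hkl

end PvB

lemma lift_pvR {n : ℕ} {G : Type*} [Group G] (f : PvGen n → G) {i j : Fin n} (h : i ≠ j) :
    FreeGroup.lift f (pvR i j h) = f ⟨(i, j), h⟩ :=
  FreeGroup.lift_apply_of

namespace PfB

variable {n : ℕ}

def gen (i j : Fin n) (h : i ≠ j) : PfB n :=
  PresentedGroup.of ⟨(i, j), h⟩

lemma gen_inv {i j : Fin n} (h : i ≠ j) : (gen j i h.symm)⁻¹ = gen i j h := by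
  have := PresentedGroup.one_of_mem (rels := pvbRels n ∪ pfbExtraRels n)
    (Or.inr ⟨j, i, h.symm, rfl⟩)
  rw [map_mul] at this
  exact inv_eq_of_mul_eq_one_right this

variable (n) in
/-- The splitting `ι`. -/
noncomputable def toPvB : PfB n →* PvB n :=
  PresentedGroup.toGroup (G := PvB n) (f := fun p => PvB.orientedGen n p.1.1 p.1.2) <| by
    rintro r ((⟨i, j, k, hij, hik, hjk, rfl⟩ | ⟨i, j, k, l, hij, hik, hil, hjk, hjl, hkl, rfl⟩) |
      ⟨i, j, hij, rfl⟩)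
    all_goals simp only [map_mul, map_inv, lift_pvR, mul_inv_eq_one]
    · exact PvB.yangBaxterAt_orientedGen hij hik hjk
    · exact PvB.commute_orientedGen hij hik hil hjk hjl hkl
    · rw [PvB.orientedGen_swap i j, mul_inv_cancel]

lemma toPvB_gen {i j : Fin n} (h : i ≠ j) : toPvB n (gen i j h) = PvB.orientedGen n i j :=
  PresentedGroup.toGroup.of _

end PfB

namespace PvB

variable {n : ℕ}

variable (n) in
/-- The quotient map `π`. -/
def toPfB : PvB n →* PfB n :=
  PresentedGroup.map (MonoidHom.id _) fun _ hr => Or.inl hr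

lemma toPfB_gen {i j : Fin n} (h : i ≠ j) : toPfB n (gen i j h) = PfB.gen i j h := rfl

lemma toPfB_orientedGen {i j : Fin n} (h : i ≠ j) :
    toPfB n (orientedGen n i j) = PfB.gen i j h := by
  rcases h.lt_or_gt with hij | hji
  · rw [orientedGen_of_lt hij, toPfB_gen]
  · rw [orientedGen_swap, orientedGen_of_lt hji, map_inv, toPfB_gen, PfB.gen_inv]

lemma toPfB_comp_toPvB : (toPfB n).comp (PfB.toPvB n) = MonoidHom.id (PfB n) :=
  PresentedGroup.ext fun ⟨(i, j), h⟩ => by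
    change toPfB n (PfB.toPvB n (PfB.gen i j h)) = PfB.gen i j h
    rw [PfB.toPvB_gen, toPfB_orientedGen]

end PvB

/-- `PfB_n` is a split quotient of `PvB_n`: there are homomorphisms
`ι : PfB_n → PvB_n` and `π : PvB_n → PfB_n` with `π ∘ ι = id`. -/
theorem pfb_split_quotient_of_pvb (n : ℕ) :
    ∃ (ι : PfB n →* PvB n) (π : PvB n →* PfB n),
      π.comp ι = MonoidHom.id (PfB n) :=
  ⟨PfB.toPvB n, PvB.toPfB n, PvB.toPfB_comp_toPvB⟩
end

section
/- In the free associative Q-algebra on symbols r_{ij} (1 ≤ i ≠ j ≤ 4), the element Zam := Y'(j,k,l)(r_{ij}+r_{ik}+r_{il}) − Y'(i,k,l)(−r_{ij}+r_{jk}+r_{jl}) + Y'(i,j,l)(−r_{ik}−r_{jk}+r_{kl}) − Y'(i,j,k)(−r_{il}−r_{jl}−r_{kl}) − C(i,j;k,l)(r_{ik}+r_{il}+r_{jk}+r_{jl}) + C(i,k;j,l)(r_{ij}+r_{il}−r_{jk}+r_{kl}) − C(i,l;j,k)(r_{ij}+r_{ik}−r_{jl}−r_{kl}) minus the same expression with all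 products reversed, equals zero, where Y'(a,b,c) := [r_{ab},r_{ac}] + [r_{ab},r_{bc}] + [r_{ac},r_{bc}] and C(a,b;c,d) := [r_{ab},r_{cd}], for {i,j,k,l} = {1,2,3,4}. -/
/-- Generators `r_{ij}`, `1 ≤ i ≠ j ≤ 4`. -/
def Gen4 := {p : Fin 4 × Fin 4 // p.1 ≠ p.2}

/-- The free associative `ℚ`-algebra on the 12 symbols `r_{ij}`. -/
abbrev F4 := FreeAlgebra ℚ Gen4

/-- The generator `r_{ab}`. -/
noncomputable def r (a b : Fin 4) (h : a ≠ b) : F4 :=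
  FreeAlgebra.ι ℚ ⟨(a, b), h⟩

/-- The ring commutator. -/
def br (x y : F4) : F4 := x * y - y * x

/-- The 6-term relator `Y'(a,b,c) = [r_{ab},r_{ac}] + [r_{ab},r_{bc}] + [r_{ac},r_{bc}]`. -/
noncomputable def Y' (a b c : Fin 4) (hab : a ≠ b) (hac : a ≠ c) (hbc : b ≠ c) : F4 :=
  br (r a b hab) (r a c hac) + br (r a b hab) (r b c hbc) + br (r a c hac) (r b c hbc)

/-- The commutativity relator `C(a,b;c,d) = [r_{ab},r_{cd}]`. -/
noncomputable def Cr (a b c d : Fin 4) (hab : a ≠ b) (hcd : c ≠ d) : F4 :=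
  br (r a b hab) (r c d hcd)

/-!
Writing `R * L - L * R = ⁅R, L⁆`, the syzygy becomes a Lie element
`Σ ±⁅ρ, λ⁆` with `ρ` a relator (a sum of brackets of generators) and `λ` a linear form, so
it suffices to prove it in an arbitrary Lie ring. Every relator involves only the six generators
`r_{ab}`, the edges of the tetrahedron on `{i, j, k, l}`, and expanding gives 48 triple brackets
of three distinct edges. They fall into 16 Jacobi identities, one for each triple of edges that is
not a triangle.
-/

section LieRing

variable {L : Type*} [LieRing L]

/-- `Y' a b c = classicalYangBaxter (r a b) (r a c) (r b c)` for the ring commutator. -/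
def classicalYangBaxter (x y z : L) : L := ⁅x, y⁆ + ⁅x, z⁆ + ⁅y, z⁆

theorem lie_lie_eq_lie_lie_sub_lie_lie (x y z : L) :
    ⁅⁅y, z⁆, x⁆ = ⁅⁅x, z⁆, y⁆ - ⁅⁅x, y⁆, z⁆ := by
  rw [← sub_eq_zero, ← neg_eq_zero, ← lie_jacobi x y z, ← lie_skew ⁅y, z⁆, ← lie_skew ⁅x, z⁆,
    ← lie_skew ⁅x, y⁆, ← lie_skew x z, lie_neg]
  abel

theorem lie_tetrahedron_syzygy (rij rik ril rjk rjl rkl : L) :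
    ⁅classicalYangBaxter rjk rjl rkl, rij + rik + ril⁆ -
      ⁅classicalYangBaxter rik ril rkl, -rij + rjk + rjl⁆ +
      ⁅classicalYangBaxter rij ril rjl, -rik - rjk + rkl⁆ -
      ⁅classicalYangBaxter rij rik rjk, -ril - rjl - rkl⁆ -
      ⁅⁅rij, rkl⁆, rik + ril + rjk + rjl⁆ + ⁅⁅rik, rjl⁆, rij + ril - rjk + rkl⁆ -
      ⁅⁅ril, rjk⁆, rij + rik - rjl - rkl⁆ = 0 := by
  -- The inner brackets are already ordered (`rij < rik < … < rkl`), so eliminating `⁅⁅y, z⁆, x⁆`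
  -- for `x < y < z` reaches a normal form.
  simp only [classicalYangBaxter, lie_add, add_lie, lie_sub, lie_neg,
    lie_lie_eq_lie_lie_sub_lie_lie rij rik ril, lie_lie_eq_lie_lie_sub_lie_lie rij rik rjl,
    lie_lie_eq_lie_lie_sub_lie_lie rij rik rkl, lie_lie_eq_lie_lie_sub_lie_lie rij ril rjk,
    lie_lie_eq_lie_lie_sub_lie_lie rij ril rkl, lie_lie_eq_lie_lie_sub_lie_lie rij rjk rjl,
    lie_lie_eq_lie_lie_sub_lie_lie rij rjk rkl, lie_lie_eq_lie_lie_sub_lie_lie rij rjl rkl,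
    lie_lie_eq_lie_lie_sub_lie_lie rik ril rjk, lie_lie_eq_lie_lie_sub_lie_lie rik ril rjl,
    lie_lie_eq_lie_lie_sub_lie_lie rik rjk rjl, lie_lie_eq_lie_lie_sub_lie_lie rik rjk rkl,
    lie_lie_eq_lie_lie_sub_lie_lie rik rjl rkl, lie_lie_eq_lie_lie_sub_lie_lie ril rjk rjl,
    lie_lie_eq_lie_lie_sub_lie_lie ril rjk rkl, lie_lie_eq_lie_lie_sub_lie_lie ril rjl rkl]
  abel

end LieRing

/-- The infinitesimal Zamolodchikov syzygy: the displayed combination of the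
6-term relators `Y'` and commutativity relators `C` multiplied on the right by
linear terms, minus the same expression with all products reversed, vanishes
identically in the free algebra on the `r_{ij}`. -/
theorem zamolodchikov_infinitesimal_syzygy (i j k l : Fin 4)
    (hij : i ≠ j) (hik : i ≠ k) (hil : i ≠ l)
    (hjk : j ≠ k) (hjl : j ≠ l) (hkl : k ≠ l) :
    (Y' j k l hjk hjl hkl * (r i j hij + r i k hik + r i l hil) -
     Y' i k l hik hil hkl * (-r i j hij + r j k hjk + r j l hjl) +
     Y' i j l hij hil hjl * (-r i k hik - r j k hjk + r k l hkl) -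
     Y' i j k hij hik hjk * (-r i l hil - r j l hjl - r k l hkl) -
     Cr i j k l hij hkl * (r i k hik + r i l hil + r j k hjk + r j l hjl) +
     Cr i k j l hik hjl * (r i j hij + r i l hil - r j k hjk + r k l hkl) -
     Cr i l j k hil hjk * (r i j hij + r i k hik - r j l hjl - r k l hkl)) -
    ((r i j hij + r i k hik + r i l hil) * Y' j k l hjk hjl hkl -
     (-r i j hij + r j k hjk + r j l hjl) * Y' i k l hik hil hkl +
     (-r i k hik - r j k hjk + r k l hkl) * Y' i j l hij hil hjl -
     (-r i l hil - r j l hjl - r k l hkl) * Y' i j k hij hik hjk -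
     (r i k hik + r i l hil + r j k hjk + r j l hjl) * Cr i j k l hij hkl +
     (r i j hij + r i l hil - r j k hjk + r k l hkl) * Cr i k j l hik hjl -
     (r i j hij + r i k hik - r j l hjl - r k l hkl) * Cr i l j k hil hjk) = 0 := by
  let _ : LieRing F4 := LieRing.ofAssociativeRing
  convert lie_tetrahedron_syzygy (r i j hij) (r i k hik) (r i l hil) (r j k hjk) (r j l hjl)
    (r k l hkl) using 1
  simp only [Y', Cr, br, classicalYangBaxter, Ring.lie_def]
  abel
end
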